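/- On any edge-labeled directed graph obtained from a nonempty irreflexive-in-labels setting, the nre next::[e] can be nonempty on an RDF graph but its naive evaluation over the edge-labeled translation (treating triples (s,p,o) as p-labeled edges s→o only) is always empty whenever the predicate positions and node positions are disjoint: concretely, for G = {(a, p, b), (p, q, d)}, ⟦next::[next::q]⟧_G = {(a, b)} on the RDF semantics, while in the plain edge-labeled graph with edges {a →ᵖ b, p →ᑫ d} no regular path query over edge labels relates a to b via a condition on the node p, since p is not a vertex reachable on any path from a to b. -/
import Mathlib


/-- The constants a, b, p, d, q. -/
inductive U5 : Type
  | a : U5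
  | b : U5
  | p : U5
  | d : U5
  | q : U5

/-- The active domain of an RDF graph. -/
def voc (G : Set (U5 × U5 × U5)) : Set U5 :=
  {c | ∃ s pr o : U5, (s, pr, o) ∈ G ∧ (c = s ∨ c = pr ∨ c = o)}

/-- The semantics of next::c on an RDF graph G. -/
def semNextC (G : Set (U5 × U5 × U5)) (c : U5) : Set (U5 × U5) :=
  {x | (x.1, c, x.2) ∈ G}

/-- The semantics of the nesting nre next::[e]. -/
def semNextNested (G : Set (U5 × U5 × U5)) (semE : Set (U5 × U5)) : Set (U5 × U5) :=
  {x | ∃ c ∈ voc G, ∃ e ∈ voc G, x ∈ semNextC G c ∧ (c, e) ∈ semE}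

/-- A path in the plain edge-labeled translation, where each triple (s, p, o) is a
single edge s → o with label p, together with its label string. -/
inductive PathLabel (E : Set (U5 × U5 × U5)) : U5 → List U5 → U5 → Prop
  | nil (x : U5) : PathLabel E x [] x
  | cons {x y z : U5} {l : U5} {ls : List U5} :
      (x, l, y) ∈ E → PathLabel E y ls z → PathLabel E x (l :: ls) z

/-- The RDF graph G = {(a, p, b), (p, q, d)}. -/
def G18 : Set (U5 × U5 × U5) := {(U5.a, U5.p, U5.b), (U5.p, U5.q, U5.d)}

lemma pathsFromB : ∀ ls v, PathLabel G18 U5.b ls v → ls = [] ∧ v = U5.b := by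
  intro ls v h
  cases h with
  | nil => exact ⟨rfl, rfl⟩
  | cons he _ =>
    rcases he with h | h <;> simp_all

lemma pathsFromA : ∀ ls v, PathLabel G18 U5.a ls v →
    (ls = [] ∧ v = U5.a) ∨ (ls = [U5.p] ∧ v = U5.b) := by
  intro ls v h
  cases h with
  | nil => exact Or.inl ⟨rfl, rfl⟩
  | cons he ht =>
    rcases he with h | h
    · injection h with h1 h2
      injection h2 with h2 h3
      subst h2 h3
      rcases pathsFromB _ _ ht with ⟨rfl, rfl⟩
      exact Or.inr ⟨rfl, rfl⟩
    · simp_all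

/-- on G = {(a,p,b), (p,q,d)}, the RDF semantics of next::[next::q]
evaluates to {(a, b)}, whereas in the plain edge-labeled translation the only path
from a to b has label string p (so no condition on the node p can be tested along
it), and p is not a vertex reachable from a by any path. -/
theorem rdf_nesting_vs_plain_translation :
    semNextNested G18 (semNextC G18 U5.q) = {(U5.a, U5.b)} ∧
    (∀ ls : List U5, PathLabel G18 U5.a ls U5.b → ls = [U5.p]) ∧
    ¬ ∃ ls : List U5, PathLabel G18 U5.a ls U5.p := by
  refine ⟨?_, ?_, ?_⟩
  · ext ⟨x, y⟩
    constructor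
    · rintro ⟨c, hc, e, he, hxy, hce⟩
      rcases hxy with h | h <;> rcases hce with h' | h' <;> simp_all [G18, semNextC]
    · rintro h
      simp only [Set.mem_singleton_iff, Prod.mk.injEq] at h
      obtain ⟨rfl, rfl⟩ := h
      refine ⟨U5.p, ⟨U5.a, U5.p, U5.b, Or.inl rfl, Or.inr (Or.inl rfl)⟩,
        U5.d, ⟨U5.p, U5.q, U5.d, Or.inr rfl, Or.inr (Or.inr rfl)⟩,
        Or.inl rfl, Or.inr rfl⟩
  · intro ls h
    rcases pathsFromA _ _ h with ⟨_, h⟩ | ⟨h, _⟩ <;> simp_all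
  · rintro ⟨ls, h⟩
    rcases pathsFromA _ _ h with ⟨_, h⟩ | ⟨_, h⟩ <;> simp_all
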